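/- arXiv:2102.08571 — 2 statements merged into one kernel-verified Lean document; each statement's English description precedes it below -/
import Mathlib

section
/- The solution of the dynamic programming equation with optimized lookahead is a lower bound for policy evaluation: if V_st is the unique fixed point of T_O and μ = (π, τ) is any stationary self-triggering policy with evaluation fixed point f^μ (the unique fixed point of T_μ), then V_st(x) ≤ f^μ(x) for every x ∈ X. -/
/-!
Since `T_O` minimizes over all actions and all waiting times `1 ≤ Δt ≤ T̄`, while `T_μ` commits
to the pair `(π x, τ x)`, the fixed point `V_st` is a subsolution of `T_μ`: `V_st ≤ T_μ V_st`.
A subsolution lies below the fixed point `f^μ`: at a state `x₀` maximizing `V_st - f^μ`, with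
maximum `M`, one gets `M ≤ β^{τ x₀} M`, and `β^{τ x₀} < 1` because `τ x₀ ≥ 1`, so `M ≤ 0`.
-/

open scoped BigOperators

/-- Expectation of `f` under a probability mass function `p` on a finite type. -/
noncomputable def expect {X : Type*} [Fintype X] (p : PMF X) (f : X → ℝ) : ℝ :=
  ∑ y, (p y).toReal * f y

/-- The classic Bellman operator `(T v)(x) = min_a ( c(x,a) + β · E_{y∼P(x,a)}[v(y)] )`. -/
noncomputable def bellman {X A : Type*} [Fintype X] [Fintype A]
    (P : X → A → PMF X) (c : X × A → ℝ) (β : ℝ) (v : X → ℝ) : X → ℝ :=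
  fun x => ⨅ a : A, (c (x, a) + β * expect (P x a) v)

/-- The skip kernel: distribution of the state after `t` steps from `x`, holding action `a`. -/
noncomputable def skip {X A : Type*} (P : X → A → PMF X) (x : X) (a : A) : ℕ → PMF X
  | 0 => PMF.pure x
  | t + 1 => (skip P x a t).bind fun y => P y a

/-- The consolidated cost `c̄(x,a,Δt) = ∑_{t=0}^{Δt−1} β^t · E_{y∼P̄(x,a,t)}[c(y,a)]`. -/
noncomputable def cbar {X A : Type*} [Fintype X]
    (P : X → A → PMF X) (c : X × A → ℝ) (β : ℝ) (x : X) (a : A) (Δt : ℕ) : ℝ :=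
  ∑ t ∈ Finset.range Δt, β ^ t * expect (skip P x a t) (fun y => c (y, a))

/-- The optimized-lookahead Bellman operator
`(T_O v)(x) = min_{a, 1 ≤ Δt ≤ T̄} ( c̄(x,a,Δt) + β^Δt ( O + E_{y∼P̄(x,a,Δt)}[v(y)] ) )`. -/
noncomputable def TO {X A : Type*} [Fintype X] [Fintype A]
    (P : X → A → PMF X) (c : X × A → ℝ) (β O : ℝ) (Tb : ℕ) (v : X → ℝ) : X → ℝ :=
  fun x => ⨅ a : A, ⨅ Δt : {n : ℕ // n ∈ Finset.Icc 1 Tb},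
    (cbar P c β x a Δt.val + β ^ Δt.val * (O + expect (skip P x a Δt.val) v))

/-- The evaluation operator of a stationary self-triggering policy `μ = (π, τ)`. -/
noncomputable def Tpol {X A : Type*} [Fintype X]
    (P : X → A → PMF X) (c : X × A → ℝ) (β O : ℝ)
    (π : X → A) (τ : X → ℕ) (v : X → ℝ) : X → ℝ :=
  fun x => cbar P c β x (π x) (τ x) + β ^ (τ x) * (O + expect (skip P x (π x) (τ x)) v)

lemma PMF.sum_toReal_eq_one {X : Type*} [Fintype X] (p : PMF X) :
    ∑ y, (p y).toReal = 1 := by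
  have h := p.tsum_coe
  rw [tsum_fintype] at h
  rw [← ENNReal.toReal_sum fun y _ => p.apply_ne_top y, h, ENNReal.toReal_one]

section Expect

variable {X : Type*} [Fintype X]

lemma expect_mono (p : PMF X) {f g : X → ℝ} (h : ∀ y, f y ≤ g y) :
    expect p f ≤ expect p g :=
  Finset.sum_le_sum fun y _ => mul_le_mul_of_nonneg_left (h y) ENNReal.toReal_nonneg

lemma expect_add_const (p : PMF X) (f : X → ℝ) (M : ℝ) :
    expect p (fun y => f y + M) = expect p f + M := by
  simp only [expect, mul_add, Finset.sum_add_distrib, ← Finset.sum_mul,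
    PMF.sum_toReal_eq_one, one_mul]

end Expect

section PolicyEvaluation

variable {X A : Type*} [Fintype X] (P : X → A → PMF X) (c : X × A → ℝ) {β : ℝ} (O : ℝ)
  (π : X → A) (τ : X → ℕ)

lemma Tpol_le_Tpol_add (hβ0 : 0 ≤ β) {v w : X → ℝ} {M : ℝ} (h : ∀ y, v y ≤ w y + M) (x : X) :
    Tpol P c β O π τ v x ≤ Tpol P c β O π τ w x + β ^ τ x * M := by
  have hE : expect (skip P x (π x) (τ x)) v ≤ expect (skip P x (π x) (τ x)) w + M :=
    expect_add_const _ w M ▸ expect_mono _ h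
  have := mul_le_mul_of_nonneg_left hE (pow_nonneg hβ0 (τ x))
  simp only [Tpol]
  linarith

lemma le_of_le_Tpol_of_Tpol_eq (hβ0 : 0 ≤ β) (hβ1 : β < 1) (hτ : ∀ x, 1 ≤ τ x)
    {v f : X → ℝ} (hv : ∀ x, v x ≤ Tpol P c β O π τ v x) (hf : Tpol P c β O π τ f = f) :
    ∀ x, v x ≤ f x := by
  intro x
  have : Nonempty X := ⟨x⟩
  obtain ⟨x₀, hx₀⟩ := Finite.exists_max fun y => v y - f y
  set M := v x₀ - f x₀
  have hM : M ≤ β ^ τ x₀ * M := by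
    have hshift : ∀ y, v y ≤ f y + M := fun y => by linarith [hx₀ y]
    have := (hv x₀).trans (Tpol_le_Tpol_add P c O π τ hβ0 hshift x₀)
    rw [hf] at this
    linarith
  have hβτ : β ^ τ x₀ < 1 := pow_lt_one₀ hβ0 hβ1 (by linarith [hτ x₀])
  have hM0 : M ≤ 0 := by nlinarith
  linarith [hx₀ x]

end PolicyEvaluation

lemma TO_le_Tpol {X A : Type*} [Fintype X] [Fintype A] (P : X → A → PMF X) (c : X × A → ℝ)
    (β O : ℝ) {Tb : ℕ} (π : X → A) (τ : X → ℕ) (hτ : ∀ x, 1 ≤ τ x ∧ τ x ≤ Tb)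
    (v : X → ℝ) (x : X) :
    TO P c β O Tb v x ≤ Tpol P c β O π τ v x :=
  Finite.ciInf_le_of_le (π x) <|
    Finite.ciInf_le (ι := {n : ℕ // n ∈ Finset.Icc 1 Tb}) _
      ⟨τ x, Finset.mem_Icc.2 (hτ x)⟩

theorem Vst_le_policy_value_general {X A : Type*} [Fintype X] [Fintype A]
    (P : X → A → PMF X) (c : X × A → ℝ)
    (β : ℝ) (hβ0 : 0 ≤ β) (hβ1 : β < 1)
    (O : ℝ) (Tb : ℕ)
    (Vst : X → ℝ) (hVst : TO P c β O Tb Vst = Vst)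
    (π : X → A) (τ : X → ℕ) (hτ : ∀ x : X, 1 ≤ τ x ∧ τ x ≤ Tb)
    (fμ : X → ℝ) (hfμ : Tpol P c β O π τ fμ = fμ) :
    ∀ x : X, Vst x ≤ fμ x := by
  have hsub : ∀ x, Vst x ≤ Tpol P c β O π τ Vst x := fun x => by
    conv_lhs => rw [← hVst]
    exact TO_le_Tpol P c β O π τ hτ Vst x
  exact le_of_le_Tpol_of_Tpol_eq P c O π τ hβ0 hβ1 (fun x => (hτ x).1) hsub hfμ

theorem Vst_le_policy_value {X A : Type*} [Fintype X] [Nonempty X] [Fintype A] [Nonempty A]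
    (P : X → A → PMF X) (c : X × A → ℝ) (hc : ∀ (x : X) (a : A), 0 ≤ c (x, a))
    (β : ℝ) (hβ0 : 0 ≤ β) (hβ1 : β < 1)
    (O : ℝ) (hO : 0 ≤ O) (Tb : ℕ) (hTb : 1 ≤ Tb)
    (Vst : X → ℝ) (hVst : TO P c β O Tb Vst = Vst)
    (π : X → A) (τ : X → ℕ) (hτ : ∀ x : X, 1 ≤ τ x ∧ τ x ≤ Tb)
    (fμ : X → ℝ) (hfμ : Tpol P c β O π τ fμ = fμ) :
    ∀ x : X, Vst x ≤ fμ x :=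
  Vst_le_policy_value_general P c β hβ0 hβ1 O Tb Vst hVst π τ hτ fμ hfμ
end

section
/- When the update penalty is zero, the self-triggered value function coincides with the classic value function: if V is the unique fixed point of the classic Bellman operator T and V_st is the unique fixed point of the optimized-lookahead operator T_O with O = 0 (for any T̄ ≥ 1), then V_st(x) = V(x) for every x ∈ X. -/
open scoped BigOperators

/-!
Since `V = T V`, every action satisfies `V ≤ c(·, a) + β E_{P(·, a)}[V]`. Hence holding an
action for one more step before re-optimizing never decreases the cost
`c̄(x, a, Δt) + β^Δt E_{P̄(x, a, Δt)}[V]`, the minimum over `Δt ≥ 1` is attained at `Δt = 1`,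
and `T_0 V = T V = V`. On the other hand `T_0` is a `β`-contraction for the sup metric, since
every branch is discounted by `β^Δt ≤ β`, so its fixed point is unique and `V_st = V`.
-/

section Expectation

variable {X : Type*} [Fintype X]

lemma PMF.sum_toReal_apply (p : PMF X) : ∑ y, (p y).toReal = 1 := by
  rw [← ENNReal.toReal_sum fun y _ => p.apply_ne_top y, ← tsum_fintype (L := .unconditional _),
    p.tsum_coe, ENNReal.toReal_one]

lemma expect_pure (x : X) (f : X → ℝ) : expect (PMF.pure x) f = f x := by
  rw [expect, Finset.sum_eq_single x (fun y _ hy => by simp [PMF.pure_apply, hy]) (by simp)]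
  simp

lemma expect_bind (p : PMF X) (q : X → PMF X) (f : X → ℝ) :
    expect (p.bind q) f = expect p fun y => expect (q y) f := by
  have hbind : ∀ z, ((p.bind q) z).toReal = ∑ y, (p y).toReal * (q y z).toReal := fun z => by
    rw [PMF.bind_apply, tsum_fintype, ENNReal.toReal_sum fun y _ =>
      ENNReal.mul_ne_top (p.apply_ne_top y) ((q y).apply_ne_top z)]
    simp only [ENNReal.toReal_mul]
  simp only [expect, hbind, Finset.sum_mul, Finset.mul_sum, mul_assoc]
  exact Finset.sum_comm

lemma expect_add (p : PMF X) (f g : X → ℝ) :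
    expect p (fun y => f y + g y) = expect p f + expect p g := by
  simp only [expect, mul_add, Finset.sum_add_distrib]

lemma expect_const_mul (p : PMF X) (r : ℝ) (f : X → ℝ) :
    expect p (fun y => r * f y) = r * expect p f := by
  simp only [expect, Finset.mul_sum, mul_left_comm]

lemma expect_const (p : PMF X) (r : ℝ) : expect p (fun _ => r) = r := by
  rw [expect, ← Finset.sum_mul, p.sum_toReal_apply, one_mul]

lemma dist_expect_le (p : PMF X) (v w : X → ℝ) : dist (expect p v) (expect p w) ≤ dist v w := by
  have hshift : ∀ f g : X → ℝ, (∀ y, f y - g y ≤ dist v w) →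
      expect p f - expect p g ≤ dist v w := fun f g h => by
    rw [sub_le_iff_le_add']
    simpa only [expect_add, expect_const] using expect_mono p fun y => sub_le_iff_le_add'.1 (h y)
  have hpt : ∀ y, |v y - w y| ≤ dist v w := dist_le_pi_dist v w
  rw [Real.dist_eq, abs_sub_le_iff]
  exact ⟨hshift v w fun y => (abs_sub_le_iff.1 (hpt y)).1,
    hshift w v fun y => (abs_sub_le_iff.1 (hpt y)).2⟩

end Expectation

section FiniteInf

variable {ι : Type*} [Finite ι] {f g : ι → ℝ} {M : ℝ}

lemma ciInf_le_ciInf_add [Nonempty ι] (h : ∀ i, f i ≤ g i + M) :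
    ⨅ i, f i ≤ (⨅ i, g i) + M := by
  rw [← sub_le_iff_le_add]
  exact le_ciInf fun i =>
    sub_le_iff_le_add.2 ((ciInf_le (Set.finite_range f).bddBelow i).trans (h i))

lemma dist_ciInf_ciInf_le (hM : 0 ≤ M) (h : ∀ i, dist (f i) (g i) ≤ M) :
    dist (⨅ i, f i) (⨅ i, g i) ≤ M := by
  cases isEmpty_or_nonempty ι
  · simpa using hM
  simp only [Real.dist_eq, abs_sub_le_iff] at h ⊢
  exact ⟨sub_le_iff_le_add'.2 (ciInf_le_ciInf_add fun i => sub_le_iff_le_add'.1 (h i).1),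
    sub_le_iff_le_add'.2 (ciInf_le_ciInf_add fun i => sub_le_iff_le_add'.1 (h i).2)⟩

end FiniteInf

section SelfTriggered

variable {X A : Type*} (P : X → A → PMF X) (c : X × A → ℝ) (β : ℝ)

lemma skip_one (x : X) (a : A) : skip P x a 1 = P x a := by
  simp only [skip, PMF.pure_bind]

variable [Fintype X]

lemma expect_skip_succ (x : X) (a : A) (n : ℕ) (f : X → ℝ) :
    expect (skip P x a (n + 1)) f = expect (skip P x a n) fun y => expect (P y a) f := by
  rw [skip, expect_bind]

lemma cbar_succ (x : X) (a : A) (n : ℕ) :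
    cbar P c β x a (n + 1) = cbar P c β x a n + β ^ n * expect (skip P x a n) fun y => c (y, a) :=
  Finset.sum_range_succ _ _

lemma cbar_one (x : X) (a : A) : cbar P c β x a 1 = c (x, a) := by
  simp [cbar, skip, expect_pure]

lemma bellman_le [Fintype A] (v : X → ℝ) (x : X) (a : A) :
    bellman P c β v x ≤ c (x, a) + β * expect (P x a) v :=
  ciInf_le (Set.finite_range _).bddBelow a

noncomputable def lookaheadValue (v : X → ℝ) (x : X) (a : A) (n : ℕ) : ℝ :=
  cbar P c β x a n + β ^ n * expect (skip P x a n) v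

lemma lookaheadValue_one (v : X → ℝ) (x : X) (a : A) :
    lookaheadValue P c β v x a 1 = c (x, a) + β * expect (P x a) v := by
  rw [lookaheadValue, cbar_one, skip_one, pow_one]

variable {P c β}

lemma monotone_lookaheadValue (hβ : 0 ≤ β) {v : X → ℝ} {a : A}
    (hv : ∀ y, v y ≤ c (y, a) + β * expect (P y a) v) (x : X) :
    Monotone (lookaheadValue P c β v x a) := by
  refine monotone_nat_of_le_succ fun n => ?_
  calc lookaheadValue P c β v x a n
      ≤ cbar P c β x a n + β ^ n * expect (skip P x a n) fun y => c (y, a) + β * expect (P y a) v :=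
        add_le_add le_rfl (mul_le_mul_of_nonneg_left (expect_mono _ hv) (pow_nonneg hβ n))
    _ = lookaheadValue P c β v x a (n + 1) := by
        rw [lookaheadValue, cbar_succ, expect_skip_succ, expect_add, expect_const_mul, pow_succ]
        ring

lemma TO_zero_eq_bellman [Fintype A] (hβ : 0 ≤ β) {Tb : ℕ} (hTb : 1 ≤ Tb) {v : X → ℝ}
    (hv : ∀ y a, v y ≤ c (y, a) + β * expect (P y a) v) :
    TO P c β 0 Tb v = bellman P c β v := by
  let one : {n : ℕ // n ∈ Finset.Icc 1 Tb} := ⟨1, Finset.mem_Icc.2 ⟨le_rfl, hTb⟩⟩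
  have : Nonempty {n : ℕ // n ∈ Finset.Icc 1 Tb} := ⟨one⟩
  funext x
  refine iInf_congr fun a => ?_
  simp only [zero_add]
  rw [← lookaheadValue_one]
  exact le_antisymm (ciInf_le (Set.finite_range _).bddBelow one)
    (le_ciInf fun Δt => monotone_lookaheadValue hβ (hv · a) x (Finset.mem_Icc.1 Δt.2).1)

lemma dist_TO_le [Fintype A] (hβ0 : 0 ≤ β) (hβ1 : β ≤ 1) (O : ℝ) (Tb : ℕ) (v w : X → ℝ) :
    dist (TO P c β O Tb v) (TO P c β O Tb w) ≤ β * dist v w := by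
  have hM : 0 ≤ β * dist v w := mul_nonneg hβ0 dist_nonneg
  refine (dist_pi_le_iff hM).2 fun x => dist_ciInf_ciInf_le hM fun a =>
    dist_ciInf_ciInf_le hM fun Δt => ?_
  have hpow : β ^ Δt.val ≤ β :=
    pow_le_of_le_one hβ0 hβ1 (Nat.one_le_iff_ne_zero.1 (Finset.mem_Icc.1 Δt.2).1)
  rw [dist_add_left, Real.dist_eq, ← mul_sub, add_sub_add_left_eq_sub, abs_mul,
    abs_of_nonneg (pow_nonneg hβ0 _), ← Real.dist_eq]
  exact mul_le_mul hpow (dist_expect_le _ v w) dist_nonneg hβ0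

lemma contractingWith_TO [Fintype A] (hβ0 : 0 ≤ β) (hβ1 : β < 1) (O : ℝ) (Tb : ℕ) :
    ContractingWith (Real.toNNReal β) (TO P c β O Tb) :=
  ⟨by simpa using hβ1, LipschitzWith.of_dist_le_mul fun v w => by
    simpa only [Real.coe_toNNReal _ hβ0] using dist_TO_le hβ0 hβ1.le O Tb v w⟩

end SelfTriggered

theorem Vst_eq_V_of_zero_penalty_general {X A : Type*} [Fintype X] [Fintype A]
    (P : X → A → PMF X) (c : X × A → ℝ)
    (β : ℝ) (hβ0 : 0 ≤ β) (hβ1 : β < 1)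
    (Tb : ℕ) (hTb : 1 ≤ Tb)
    (V : X → ℝ) (hV : bellman P c β V = V)
    (Vst : X → ℝ) (hVst : TO P c β 0 Tb Vst = Vst) :
    ∀ x : X, Vst x = V x := by
  have hVsub : ∀ y a, V y ≤ c (y, a) + β * expect (P y a) V := fun y a =>
    (congrFun hV y).symm.trans_le (bellman_le P c β V y a)
  have hVfix : TO P c β 0 Tb V = V := (TO_zero_eq_bellman hβ0 hTb hVsub).trans hV
  exact congrFun ((contractingWith_TO hβ0 hβ1 0 Tb).fixedPoint_unique' hVst hVfix)

theorem Vst_eq_V_of_zero_penalty {X A : Type*} [Fintype X] [Nonempty X] [Fintype A] [Nonempty A]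
    (P : X → A → PMF X) (c : X × A → ℝ) (hc : ∀ (x : X) (a : A), 0 ≤ c (x, a))
    (β : ℝ) (hβ0 : 0 ≤ β) (hβ1 : β < 1)
    (Tb : ℕ) (hTb : 1 ≤ Tb)
    (V : X → ℝ) (hV : bellman P c β V = V)
    (Vst : X → ℝ) (hVst : TO P c β 0 Tb Vst = Vst) :
    ∀ x : X, Vst x = V x :=
  Vst_eq_V_of_zero_penalty_general P c β hβ0 hβ1 Tb hTb V hV Vst hVst
end
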